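/- Suppose u, ρ : ℝ^d × [0,T] → ℝ are C^{2,1}, u satisfies the HJB equation −∂u/∂t + (1/2)‖σ∇u‖² − ⟨∇u, f⟩ − (σ²/2)Δu = F, and ρ satisfies the Fokker-Planck equation ∂ρ/∂t − div(ρ(σ²∇u − f)) − (σ²/2)Δρ = 0. Then Ψ̂(x,t) := ρ(x,t)·exp(u(x,t)) satisfies ∂Ψ̂/∂t = −div(Ψ̂ f) + (σ²/2)ΔΨ̂ − F·Ψ̂. -/

import Mathlib

/-!
With `Ψ̂ = ρ eᵘ` one has `∂ₜΨ̂ = eᵘ (∂ₜρ + ρ ∂ₜu)`. Substituting `∂ₜρ` from the Fokker–Planck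
equation and `∂ₜu` from the HJB equation, the claim becomes an algebraic identity once
`ΔΨ̂ = eᵘ (Δρ + 2⟨∇ρ, ∇u⟩ + ρ Δu + ρ ‖∇u‖²)` and `div (Ψ̂ f) = ⟨∇Ψ̂, f⟩ + Ψ̂ div f` are known.
These calculus rules all follow from `Δ = div ∘ ∇`, with `div v = tr (Dv)`.
-/

open MeasureTheory Real Filter
open scoped RealInnerProductSpace BigOperators Topology

abbrev E (d : ℕ) := EuclideanSpace ℝ (Fin d)

/-- Laplacian: trace of the second derivative. -/
noncomputable def lap {d : ℕ} (p : E d → ℝ) (x : E d) : ℝ :=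
  ∑ i, iteratedFDeriv ℝ 2 p x ![EuclideanSpace.single i 1, EuclideanSpace.single i 1]

/-- Divergence of a vector field. -/
noncomputable def dvg {d : ℕ} (v : E d → E d) (x : E d) : ℝ :=
  ∑ i, ⟪fderiv ℝ v x (EuclideanSpace.single i 1), EuclideanSpace.single i (1:ℝ)⟫

section Gradient

variable {F : Type*} [NormedAddCommGroup F] [InnerProductSpace ℝ F] [CompleteSpace F]
  {p q : F → ℝ} {x : F}

lemma gradient_fun_mul (hp : DifferentiableAt ℝ p x) (hq : DifferentiableAt ℝ q x) :
    gradient (fun y => p y * q y) x = p x • gradient q x + q x • gradient p x := by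
  refine (hasGradientAt_iff_hasFDerivAt.2
    ((hp.hasFDerivAt.mul hq.hasFDerivAt).congr_fderiv ?_)).gradient
  ext v
  simp

lemma gradient_fun_exp (hp : DifferentiableAt ℝ p x) :
    gradient (fun y => Real.exp (p y)) x = Real.exp (p x) • gradient p x := by
  refine (hasGradientAt_iff_hasFDerivAt.2 (hp.hasFDerivAt.exp.congr_fderiv ?_)).gradient
  ext v
  simp

lemma ContDiff.differentiable_gradient (hp : ContDiff ℝ 2 p) : Differentiable ℝ (gradient p) :=
  ((InnerProductSpace.toDual ℝ F).symm.toContinuousLinearEquiv.contDiff.comp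
    (hp.fderiv_right (m := 1) le_rfl)).differentiable one_ne_zero

end Gradient

section Divergence

variable {d : ℕ} {x : E d}

lemma dvg_eq_trace (v : E d → E d) (x : E d) :
    dvg v x = LinearMap.trace ℝ (E d) (fderiv ℝ v x : E d →ₗ[ℝ] E d) := by
  rw [LinearMap.trace_eq_sum_inner _ (EuclideanSpace.basisFun (Fin d) ℝ)]
  simp only [dvg, EuclideanSpace.basisFun_apply, ContinuousLinearMap.coe_coe, real_inner_comm]

lemma dvg_add {v w : E d → E d} (hv : DifferentiableAt ℝ v x) (hw : DifferentiableAt ℝ w x) :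
    dvg (fun y => v y + w y) x = dvg v x + dvg w x := by
  simp only [dvg_eq_trace, fderiv_fun_add hv hw, ContinuousLinearMap.toLinearMap_add, map_add]

lemma dvg_sub {v w : E d → E d} (hv : DifferentiableAt ℝ v x) (hw : DifferentiableAt ℝ w x) :
    dvg (fun y => v y - w y) x = dvg v x - dvg w x := by
  simp only [dvg_eq_trace, fderiv_fun_sub hv hw, ContinuousLinearMap.toLinearMap_sub, map_sub]

lemma dvg_const_smul {v : E d → E d} (c : ℝ) (hv : DifferentiableAt ℝ v x) :
    dvg (fun y => c • v y) x = c * dvg v x := by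
  simp only [dvg_eq_trace, fderiv_fun_const_smul hv c, ContinuousLinearMap.toLinearMap_smul,
    map_smul, smul_eq_mul]

lemma dvg_smul {g : E d → ℝ} {v : E d → E d} (hg : DifferentiableAt ℝ g x)
    (hv : DifferentiableAt ℝ v x) :
    dvg (fun y => g y • v y) x = ⟪gradient g x, v x⟫ + g x * dvg v x := by
  simp only [dvg_eq_trace, fderiv_fun_smul hg hv, ContinuousLinearMap.toLinearMap_add, map_add,
    ContinuousLinearMap.toLinearMap_smul, map_smul, smul_eq_mul, inner_gradient_left]
  rw [add_comm]
  congr 1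
  exact LinearMap.trace_smulRight (fderiv ℝ g x : E d →ₗ[ℝ] ℝ) (v x)

lemma lap_eq_dvg_gradient {p : E d → ℝ} (hp : ContDiff ℝ 2 p) (x : E d) :
    lap p x = dvg (gradient p) x := by
  have hD : HasFDerivAt (gradient p)
      ((InnerProductSpace.toDual ℝ (E d)).symm.toContinuousLinearEquiv.toContinuousLinearMap.comp
        (fderiv ℝ (fderiv ℝ p) x)) x :=
    (InnerProductSpace.toDual ℝ (E d)).symm.toContinuousLinearEquiv.hasFDerivAt.comp x
      (((hp.fderiv_right (m := 1) le_rfl).differentiable one_ne_zero) x).hasFDerivAt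
  simp [lap, dvg, iteratedFDeriv_two_apply, hD.fderiv]

lemma lap_mul {p q : E d → ℝ} (hp : ContDiff ℝ 2 p) (hq : ContDiff ℝ 2 q) (x : E d) :
    lap (fun y => p y * q y) x
      = p x * lap q x + 2 * ⟪gradient p x, gradient q x⟫ + q x * lap p x := by
  have hp1 : Differentiable ℝ p := hp.differentiable two_ne_zero
  have hq1 : Differentiable ℝ q := hq.differentiable two_ne_zero
  have hgp : DifferentiableAt ℝ (gradient p) x := hp.differentiable_gradient x
  have hgq : DifferentiableAt ℝ (gradient q) x := hq.differentiable_gradient x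
  have hgrad : gradient (fun y => p y * q y) = fun y => p y • gradient q y + q y • gradient p y :=
    funext fun y => gradient_fun_mul (hp1 y) (hq1 y)
  rw [lap_eq_dvg_gradient (hp.mul hq), hgrad,
    dvg_add ((hp1 x).fun_smul hgq) ((hq1 x).fun_smul hgp), dvg_smul (hp1 x) hgq,
    dvg_smul (hq1 x) hgp, ← lap_eq_dvg_gradient hp, ← lap_eq_dvg_gradient hq,
    real_inner_comm (gradient p x)]
  ring

lemma lap_exp {p : E d → ℝ} (hp : ContDiff ℝ 2 p) (x : E d) :
    lap (fun y => Real.exp (p y)) x = Real.exp (p x) * (lap p x + ‖gradient p x‖ ^ 2) := by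
  have hp1 : Differentiable ℝ p := hp.differentiable two_ne_zero
  have hgrad : gradient (fun y => Real.exp (p y)) = fun y => Real.exp (p y) • gradient p y :=
    funext fun y => gradient_fun_exp (hp1 y)
  rw [lap_eq_dvg_gradient hp.exp, hgrad, dvg_smul (hp1 x).exp (hp.differentiable_gradient x),
    gradient_fun_exp (hp1 x), ← lap_eq_dvg_gradient hp, real_inner_smul_left,
    real_inner_self_eq_norm_sq]
  ring

end Divergence

theorem stmt5 {d : ℕ} (σ : ℝ) (u ρ : ℝ → E d → ℝ) (f : ℝ → E d → E d) (F : ℝ → E d → ℝ)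
    (hu2 : ∀ t, ContDiff ℝ 2 (u t)) (hρ2 : ∀ t, ContDiff ℝ 2 (ρ t))
    (hut : ∀ (x : E d) (t : ℝ), DifferentiableAt ℝ (fun s => u s x) t)
    (hρt : ∀ (x : E d) (t : ℝ), DifferentiableAt ℝ (fun s => ρ s x) t)
    (hf : ∀ t, ContDiff ℝ 1 (f t))
    (hHJB : ∀ (t : ℝ) (x : E d),
      -(deriv (fun s => u s x) t) + (1/2) * ‖σ • gradient (u t) x‖ ^ 2
        - ⟪gradient (u t) x, f t x⟫ - (σ ^ 2 / 2) * lap (u t) x = F t x)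
    (hFP : ∀ (t : ℝ) (x : E d),
      deriv (fun s => ρ s x) t
        - dvg (fun y => ρ t y • (σ ^ 2 • gradient (u t) y - f t y)) x
        - (σ ^ 2 / 2) * lap (ρ t) x = 0) :
    ∀ (t : ℝ) (x : E d),
      deriv (fun s => ρ s x * Real.exp (u s x)) t
        = -(dvg (fun y => (ρ t y * Real.exp (u t y)) • f t y) x)
          + (σ ^ 2 / 2) * lap (fun y => ρ t y * Real.exp (u t y)) x
          - F t x * (ρ t x * Real.exp (u t x)) := by
  intro t x
  have hu : DifferentiableAt ℝ (u t) x := (hu2 t).differentiable two_ne_zero x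
  have hρ : DifferentiableAt ℝ (ρ t) x := (hρ2 t).differentiable two_ne_zero x
  have hft : DifferentiableAt ℝ (f t) x := (hf t).differentiable one_ne_zero x
  have hgu : DifferentiableAt ℝ (gradient (u t)) x := (hu2 t).differentiable_gradient x
  have hΨ_deriv : deriv (fun s => ρ s x * Real.exp (u s x)) t
      = deriv (fun s => ρ s x) t * Real.exp (u t x)
        + ρ t x * (Real.exp (u t x) * deriv (fun s => u s x) t) :=
    ((hρt x t).hasDerivAt.mul (hut x t).hasDerivAt.exp).deriv
  have hdvg_Ψf := dvg_smul (hρ.fun_mul hu.exp) hft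
  rw [gradient_fun_mul hρ hu.exp, gradient_fun_exp hu] at hdvg_Ψf
  have hFP' := hFP t x
  rw [dvg_smul hρ ((hgu.fun_const_smul _).fun_sub hft), dvg_sub (hgu.fun_const_smul _) hft,
    dvg_const_smul _ hgu, ← lap_eq_dvg_gradient (hu2 t)] at hFP'
  have hHJB' := hHJB t x
  rw [norm_smul, mul_pow, Real.norm_eq_abs, sq_abs] at hHJB'
  rw [hΨ_deriv, hdvg_Ψf, lap_mul (hρ2 t) (hu2 t).exp, lap_exp (hu2 t), gradient_fun_exp hu]
  simp only [inner_add_left, inner_sub_right, real_inner_smul_left, real_inner_smul_right]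
    at hFP' ⊢
  linear_combination Real.exp (u t x) * hFP' - (ρ t x * Real.exp (u t x)) * hHJB'
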